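/- Let p ≥ 3 be an odd integer and q the multiplicative order of 2 modulo p. Let S and S′ be complete prefix codes of the same cardinality n, with lexicographic enumerations u₀ < ⋯ < u_{n−1} and u′₀ < ⋯ < u′_{n−1}. Then val_p(u_i) = val_p(u′_i) for all 0 ≤ i ≤ n−1 if and only if |u_i| ≡ |u′_i| (mod q) for all 0 ≤ i ≤ n−1. (This is the characterization of the p-colorable subgroup: a tree diagram (T₊, T₋) satisfies ρ(i₊) ≡ ρ(i₋) (mod p) for all leaves i if and only if ∥i₊∥ ≡ ∥i₋∥ (mod q) for all leaves i.) -/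

import Mathlib

/-! A lexicographically sorted complete prefix code is the left-to-right leaf sequence of a
finite full binary tree: splitting off the first letter leaves two prefix codes whose Kraft sums
are at most `1` (Kraft's inequality) and average to `1`, so both are complete again.
Induction over the tree shows that `val_p` of the `i`-th leaf is the partial Kraft sum
`Σ_{j<i} 2^{-|u_j|}` in `ZMod p`, and that the whole Kraft sum is `1` there as well. Hence the
values agree for all `i` iff the partial sums do, iff the summands `2^{-|u_i|}` do, iff the
lengths agree modulo the order of `2`. -/

/-- `val_p(a₁ ⋯ aₙ) = Σ_{i=1}^n aᵢ · (2⁻¹)^i ∈ ZMod p`, the reduction of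
`ρ(a₁ ⋯ aₙ)` modulo `p`, defined recursively on the binary word. -/
def valp (p : ℕ) : List Bool → ZMod p
  | [] => 0
  | a :: t => ((if a then 1 else 0) + valp p t) * (2 : ZMod p)⁻¹

variable {R α : Type*} [Semiring R]

def kraftSum (c : R) (L : List (List α)) : R :=
  (L.map fun u => c ^ u.length).sum

@[simp]
lemma kraftSum_nil (c : R) : kraftSum c ([] : List (List α)) = 0 := rfl

@[simp]
lemma kraftSum_singleton_nil (c : R) : kraftSum c [([] : List α)] = 1 := by
  simp [kraftSum]

@[simp]
lemma kraftSum_append (c : R) (L M : List (List α)) :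
    kraftSum c (L ++ M) = kraftSum c L + kraftSum c M := by
  simp [kraftSum]

@[simp]
lemma kraftSum_map_cons (c : R) (a : α) (L : List (List α)) :
    kraftSum c (L.map (a :: ·)) = c * kraftSum c L := by
  simp [kraftSum, Function.comp_def, pow_succ', List.sum_map_mul_left]

/-- The leaf addresses of a finite full binary tree, listed from left to right. -/
inductive IsTreeLeaves : List (List Bool) → Prop
  | leaf : IsTreeLeaves [[]]
  | node {L₀ L₁ : List (List Bool)} : IsTreeLeaves L₀ → IsTreeLeaves L₁ →
      IsTreeLeaves (L₀.map (false :: ·) ++ L₁.map (true :: ·))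

lemma IsTreeLeaves.kraftSum_eq_one {c : R} (hc : 2 * c = 1) {L : List (List Bool)}
    (h : IsTreeLeaves L) : kraftSum c L = 1 := by
  induction h with
  | leaf => exact kraftSum_singleton_nil c
  | node _ _ ih₀ ih₁ => rw [kraftSum_append, kraftSum_map_cons, kraftSum_map_cons, ih₀, ih₁,
      mul_one, ← two_mul, hc]

lemma IsTreeLeaves.valp_getElem {p : ℕ} (h2 : (2 : ZMod p) * 2⁻¹ = 1) {L : List (List Bool)}
    (h : IsTreeLeaves L) (i : ℕ) (hi : i < L.length) :
    valp p L[i] = kraftSum 2⁻¹ (L.take i) := by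
  induction h generalizing i with
  | leaf =>
    obtain rfl : i = 0 := by simpa using hi
    simp [valp]
  | @node L₀ L₁ h₀ _ ih₀ ih₁ =>
    simp only [List.length_append, List.length_map] at hi
    rcases lt_or_ge i L₀.length with hi₀ | hi₀
    · rw [List.getElem_append_left (by simpa using hi₀), List.getElem_map,
        List.take_append_of_le_length (by simpa using hi₀.le), ← List.map_take,
        kraftSum_map_cons, valp, ih₀ i hi₀]
      simp [mul_comm]
    · obtain ⟨j, rfl⟩ := Nat.exists_eq_add_of_le hi₀
      -- the leading `true` contributes `2⁻¹`, which is the whole left subtree's share `2⁻¹ * 1`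
      rw [List.getElem_append_right (by simp), List.getElem_map, List.take_append,
        List.take_of_length_le (by simp), ← List.map_take, kraftSum_append, kraftSum_map_cons,
        kraftSum_map_cons, h₀.kraftSum_eq_one h2, valp]
      simp only [List.length_map, Nat.add_sub_cancel_left, ite_true]
      rw [ih₁ j (by omega)]
      ring

lemma exists_eq_map_false_append_map_true {L : List (List Bool)}
    (hs : L.Pairwise (· < ·)) (hnil : [] ∉ L) :
    ∃ L₀ L₁ : List (List Bool), L = L₀.map (false :: ·) ++ L₁.map (true :: ·) := by
  induction L with
  | nil => exact ⟨[], [], rfl⟩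
  | cons u L ih =>
    obtain ⟨hu, hs⟩ := List.pairwise_cons.1 hs
    obtain ⟨L₀, L₁, rfl⟩ := ih hs (fun h => hnil (List.mem_cons_of_mem _ h))
    match u, L₀ with
    | [], _ => simp at hnil
    | false :: t, L₀ => exact ⟨t :: L₀, L₁, rfl⟩
    | true :: t, [] => exact ⟨[], t :: L₁, rfl⟩
    | true :: t, s :: L₀ =>
      exact absurd (hu (false :: s) (by simp)) (by simp [List.cons_lt_cons_iff])

structure IsSortedPrefixCode (L : List (List Bool)) : Prop where
  sorted : L.Pairwise (· < ·)
  prefixFree : ∀ u ∈ L, ∀ v ∈ L, u ≠ v → ¬ u <+: v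

namespace IsSortedPrefixCode

variable {L : List (List Bool)}

lemma sublist {M : List (List Bool)} (h : IsSortedPrefixCode L) (hM : M.Sublist L) :
    IsSortedPrefixCode M :=
  ⟨h.sorted.sublist hM, fun u hu v hv => h.prefixFree u (hM.subset hu) v (hM.subset hv)⟩

lemma of_map_cons {b : Bool} (h : IsSortedPrefixCode (L.map (b :: ·))) :
    IsSortedPrefixCode L where
  sorted := by simpa using List.pairwise_map.1 h.sorted
  prefixFree u hu v hv huv hpre := h.prefixFree _ (List.mem_map_of_mem hu) _
    (List.mem_map_of_mem hv) (by simpa using huv) (List.cons_prefix_cons.2 ⟨rfl, hpre⟩)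

lemma eq_singleton_nil (h : IsSortedPrefixCode L) (hnil : [] ∈ L) : L = [[]] := by
  obtain ⟨n, rfl⟩ : ∃ n, L = List.replicate n [] :=
    ⟨L.length, List.eq_replicate_iff.2 ⟨rfl, fun v hv =>
      by_contra fun hv' => h.prefixFree [] hnil v hv (Ne.symm hv') List.nil_prefix⟩⟩
  have hn : n ≤ 1 := List.nodup_replicate.1 h.sorted.nodup
  have hn' : n ≠ 0 := by rintro rfl; simp at hnil
  obtain rfl : n = 1 := by omega
  rfl

@[elab_as_elim]
theorem induction {P : List (List Bool) → Prop} (nil : P []) (leaf : P [[]])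
    (node : ∀ {L₀ L₁}, IsSortedPrefixCode L₀ → IsSortedPrefixCode L₁ → P L₀ → P L₁ →
      P (L₀.map (false :: ·) ++ L₁.map (true :: ·)))
    (h : IsSortedPrefixCode L) : P L := by
  obtain ⟨n, hn⟩ : ∃ n, ∀ u ∈ L, u.length ≤ n :=
    ⟨(L.map List.length).sum, fun u hu => List.le_sum_of_mem (List.mem_map_of_mem hu)⟩
  induction n generalizing L with
  | zero =>
    by_cases hnil : [] ∈ L
    · rw [h.eq_singleton_nil hnil]; exact leaf
    · rwa [List.eq_nil_iff_forall_not_mem.2 fun u hu =>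
        hnil (List.length_eq_zero_iff.1 (Nat.le_zero.1 (hn u hu)) ▸ hu)]
  | succ n ih =>
    by_cases hnil : [] ∈ L
    · rw [h.eq_singleton_nil hnil]; exact leaf
    obtain ⟨L₀, L₁, rfl⟩ := exists_eq_map_false_append_map_true h.sorted hnil
    have h₀ := (h.sublist (List.sublist_append_left _ _)).of_map_cons
    have h₁ := (h.sublist (List.sublist_append_right _ _)).of_map_cons
    exact node h₀ h₁
      (ih h₀ fun u hu => Nat.succ_le_succ_iff.1 (hn (false :: u) (by simp [hu])))
      (ih h₁ fun u hu => Nat.succ_le_succ_iff.1 (hn (true :: u) (by simp [hu])))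

lemma kraftSum_le_one (h : IsSortedPrefixCode L) : kraftSum (2⁻¹ : ℚ) L ≤ 1 := by
  refine h.induction (by simp) (by simp) fun _ _ ih₀ ih₁ => ?_
  simp only [kraftSum_append, kraftSum_map_cons]
  linarith

lemma isTreeLeaves (h : IsSortedPrefixCode L) (hL : kraftSum (2⁻¹ : ℚ) L = 1) :
    IsTreeLeaves L := by
  revert hL
  refine h.induction (by simp) (fun _ => .leaf) fun h₀ h₁ ih₀ ih₁ hL => ?_
  simp only [kraftSum_append, kraftSum_map_cons] at hL
  have := h₀.kraftSum_le_one
  have := h₁.kraftSum_le_one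
  exact .node (ih₀ (by linarith)) (ih₁ (by linarith))

end IsSortedPrefixCode

lemma List.forall_lt_sum_take_eq_iff {M : Type*} [AddLeftCancelMonoid M] {l l' : List M}
    (hlen : l.length = l'.length) (hsum : l.sum = l'.sum) :
    (∀ i < l.length, (l.take i).sum = (l'.take i).sum) ↔ l = l' := by
  refine ⟨fun h => List.eq_of_sum_take_eq hlen fun i hi => ?_, by rintro rfl _ _; rfl⟩
  rcases hi.lt_or_eq with hi | rfl
  · exact h i hi
  · rwa [List.take_length, hlen, List.take_length]

lemma ZMod.isUnit_two {p : ℕ} (hp : Odd p) : IsUnit (2 : ZMod p) := by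
  simpa using (ZMod.unitOfCoprime 2 (Nat.coprime_two_left.2 hp)).isUnit

lemma ZMod.inv_two_pow_eq_inv_two_pow_iff {p : ℕ} (hp : Odd p) {m k : ℕ} :
    (2 : ZMod p)⁻¹ ^ m = (2 : ZMod p)⁻¹ ^ k ↔ m ≡ k [MOD orderOf (2 : ZMod p)] := by
  obtain ⟨u, hu⟩ := ZMod.isUnit_two hp
  rw [← hu, ZMod.inv_coe_unit, ← Units.val_pow_eq_pow_val, ← Units.val_pow_eq_pow_val,
    Units.val_inj, pow_eq_pow_iff_modEq, orderOf_inv, orderOf_units]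

theorem valp_eq_iff_length_modEq_general (p : ℕ) (hodd : Odd p)
    (L L' : List (List Bool))
    (hsorted : L.Pairwise (· < ·)) (hsorted' : L'.Pairwise (· < ·))
    (hprefixfree : ∀ u ∈ L, ∀ v ∈ L, u ≠ v → ¬ u <+: v)
    (hprefixfree' : ∀ u ∈ L', ∀ v ∈ L', u ≠ v → ¬ u <+: v)
    (hsum : (L.map fun u => ((2 : ℚ)⁻¹) ^ u.length).sum = 1)
    (hsum' : (L'.map fun u => ((2 : ℚ)⁻¹) ^ u.length).sum = 1)
    (hlen : L.length = L'.length) :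
    (∀ i : ℕ, i < L.length → valp p (L.getD i []) = valp p (L'.getD i [])) ↔
      (∀ i : ℕ, i < L.length →
        (L.getD i []).length ≡ (L'.getD i []).length [MOD orderOf (2 : ZMod p)]) := by
  have h2 : (2 : ZMod p) * 2⁻¹ = 1 := ZMod.mul_inv_of_unit _ (ZMod.isUnit_two hodd)
  have hT := IsSortedPrefixCode.isTreeLeaves ⟨hsorted, hprefixfree⟩ hsum
  have hT' := IsSortedPrefixCode.isTreeLeaves ⟨hsorted', hprefixfree'⟩ hsum'
  let w : List Bool → ZMod p := fun u => (2 : ZMod p)⁻¹ ^ u.length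
  calc (∀ i < L.length, valp p (L.getD i []) = valp p (L'.getD i []))
      ↔ ∀ i < L.length, ((L.map w).take i).sum = ((L'.map w).take i).sum := by
        refine forall₂_congr fun i hi => ?_
        rw [L.getD_eq_getElem _ hi, L'.getD_eq_getElem _ (hlen ▸ hi), hT.valp_getElem h2,
          hT'.valp_getElem h2, ← List.map_take, ← List.map_take]
        rfl
    _ ↔ L.map w = L'.map w := by
        rw [← L.length_map w]
        exact List.forall_lt_sum_take_eq_iff (by simp [hlen])
          ((hT.kraftSum_eq_one h2).trans (hT'.kraftSum_eq_one h2).symm)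
    _ ↔ _ := by
      simp +contextual [List.ext_getElem_iff, ← hlen, w,
        ZMod.inv_two_pow_eq_inv_two_pow_iff hodd]

/-- Let `p ≥ 3` be odd and `q` the multiplicative order of `2` modulo `p`.  Let `S`, `S′`
be complete prefix codes of the same cardinality `n`, presented as the lists `L`, `L'` of
their elements in lexicographic order (nonempty, sorted, prefix-free, `Σ 2^{−|u|} = 1`).
Then `val_p(u_i) = val_p(u′_i)` for all `i` iff `|u_i| ≡ |u′_i| (mod q)` for all `i`. -/
theorem valp_eq_iff_length_modEq (p : ℕ) (hp3 : 3 ≤ p) (hodd : Odd p)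
    (L L' : List (List Bool)) (hne : L ≠ []) (hne' : L' ≠ [])
    (hsorted : L.Pairwise (· < ·)) (hsorted' : L'.Pairwise (· < ·))
    (hprefixfree : ∀ u ∈ L, ∀ v ∈ L, u ≠ v → ¬ u <+: v)
    (hprefixfree' : ∀ u ∈ L', ∀ v ∈ L', u ≠ v → ¬ u <+: v)
    (hsum : (L.map fun u => ((2 : ℚ)⁻¹) ^ u.length).sum = 1)
    (hsum' : (L'.map fun u => ((2 : ℚ)⁻¹) ^ u.length).sum = 1)
    (hlen : L.length = L'.length) :
    (∀ i : ℕ, i < L.length → valp p (L.getD i []) = valp p (L'.getD i [])) ↔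
      (∀ i : ℕ, i < L.length →
        (L.getD i []).length ≡ (L'.getD i []).length [MOD orderOf (2 : ZMod p)]) :=
  valp_eq_iff_length_modEq_general p hodd L L' hsorted hsorted' hprefixfree hprefixfree' hsum hsum'
    hlen
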